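/- arXiv:math/0511677 — 4 statements merged into one kernel-verified Lean document; each statement's English description precedes it below -/
import Mathlib

section
/- Let σ be a prolongable morphism defined on a finite alphabet A, let a be its associated infinite fixed point, and let a be the first letter of a. Then there exists a positive constant c such that, for every positive integer n and every letter b occurring in a, one has |σ^n(a)| ≥ c·|σ^n(b)|. -/
/-- The `n`-th iterate of the morphism `σ` (given by its action on letters and
extended to the free monoid by concatenation) applied to the word `W`. -/
def iterM {A : Type*} (σ : A → List A) (n : ℕ) (W : List A) : List A :=
  (fun L => L.flatMap σ)^[n] W

/-- The morphism `σ` is prolongable on the letter `l`: `σ l = l W` for a word `W`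
such that `σ^n(W)` is non-empty for every `n ≥ 0`. -/
def Prolongable {A : Type*} (σ : A → List A) (l : A) : Prop :=
  ∃ W : List A, σ l = l :: W ∧ ∀ n : ℕ, iterM σ n W ≠ []

/-- The infinite word `x` is the fixed point of the prolongable morphism `σ`
starting from the letter `l`: every word `σ^n(l)` is a prefix of `x`. -/
def IsFixedPointSeq {A : Type*} (σ : A → List A) (l : A) (x : ℕ → A) : Prop :=
  ∀ n i, i < (iterM σ n [l]).length → (iterM σ n [l])[i]? = some (x i)

lemma iterM_append {A : Type*} (σ : A → List A) (n : ℕ) (u v : List A) :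
    iterM σ n (u ++ v) = iterM σ n u ++ iterM σ n v := by
  induction n generalizing u v with
  | zero => rfl
  | succ n ih =>
    simp only [iterM, Function.iterate_succ_apply] at *
    rw [List.flatMap_append, ih]

lemma iterM_add {A : Type*} (σ : A → List A) (m n : ℕ) (W : List A) :
    iterM σ (m + n) W = iterM σ m (iterM σ n W) := by
  simp [iterM, Function.iterate_add_apply]

lemma iterM_length_le {A : Type*} (σ : A → List A) (M : ℕ)
    (hM : ∀ a, (σ a).length ≤ M) (K : ℕ) (W : List A) :
    (iterM σ K W).length ≤ M ^ K * W.length := by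
  induction K generalizing W with
  | zero => simp [iterM]
  | succ K ih =>
    rw [iterM, Function.iterate_succ_apply]
    calc ((fun L => L.flatMap σ)^[K] (W.flatMap σ)).length
        ≤ M ^ K * (W.flatMap σ).length := ih _
      _ ≤ M ^ K * (M * W.length) := by
          gcongr
          rw [List.length_flatMap]
          calc (W.map fun a => (σ a).length).sum
              ≤ (W.map fun a => (σ a).length).length * M := by
                apply List.sum_le_card_nsmul
                intro y hy
                simp at hy
                obtain ⟨a, _, ha⟩ := hy
                exact ha ▸ hM a
            _ = M * W.length := by simp [Nat.mul_comm]
      _ = M ^ (K + 1) * W.length := by ring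

lemma iterM_growth {A : Type*} (σ : A → List A) (l : A) (W : List A)
    (hσ : σ l = l :: W) (hW : ∀ n, iterM σ n W ≠ []) (n : ℕ) :
    n < (iterM σ n [l]).length := by
  induction n with
  | zero => simp [iterM]
  | succ n ih =>
    have h1 : iterM σ (n+1) [l] = iterM σ n [l] ++ iterM σ n W := by
      have h0 : iterM σ (n+1) [l] = iterM σ n ([l] ++ W) := by
        simp only [iterM, Function.iterate_succ_apply]
        congr 1
        simp [hσ]
      rw [h0, iterM_append]
    rw [h1, List.length_append]
    have := List.length_pos_iff.mpr (hW n)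
    omega

/-- Lemma 2: let `σ` be a prolongable morphism on a finite alphabet, with
infinite fixed point `x` beginning with the letter `l`.  Then there is a
positive constant `c` such that for every positive integer `n` and every letter
`b` occurring in `x` one has `|σ^n(l)| ≥ c·|σ^n(b)|`. -/
theorem statement9 {A : Type*} [Finite A] (σ : A → List A) (l : A) (x : ℕ → A)
    (hpro : Prolongable σ l) (hfix : IsFixedPointSeq σ l x) :
    ∃ c : ℝ, 0 < c ∧ ∀ n : ℕ, 0 < n → ∀ b : A, (∃ i, x i = b) →
      c * ((iterM σ n [b]).length : ℝ) ≤ ((iterM σ n [l]).length : ℝ) := by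
  obtain ⟨W, hσ, hW⟩ := hpro
  obtain ⟨M0, hM0⟩ := Finite.exists_le (fun a : A => (σ a).length)
  set M := max M0 1 with hMdef
  have hM : ∀ a, (σ a).length ≤ M := fun a => le_trans (hM0 a) (le_max_left _ _)
  have hM1 : 1 ≤ M := le_max_right _ _
  obtain ⟨N, hN⟩ := Finite.exists_le (fun b : {b : A // ∃ i, x i = b} => b.2.choose)
  refine ⟨((M : ℝ) ^ N)⁻¹, by positivity, ?_⟩
  intro n _ b hb
  set i := hb.choose with hi
  have hxi : x i = b := hb.choose_spec
  have hiN : i ≤ N := hN ⟨b, hb⟩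
  have hlt : i < (iterM σ i [l]).length := iterM_growth σ l W hσ hW i
  have hmem : b ∈ iterM σ i [l] := by
    have h := hfix i i hlt
    rw [hxi] at h
    exact List.mem_of_getElem? h
  obtain ⟨s, t, hst⟩ := List.append_of_mem hmem
  have key : (iterM σ n [b]).length ≤ M ^ N * (iterM σ n [l]).length := by
    have h1 : (iterM σ n [b]).length ≤ (iterM σ (n + i) [l]).length := by
      rw [iterM_add, hst]
      have hsplit : s ++ b :: t = s ++ [b] ++ t := by simp
      rw [hsplit, iterM_append, iterM_append]
      simp only [List.length_append]
      omega
    have h2 : (iterM σ (n + i) [l]).length ≤ M ^ i * (iterM σ n [l]).length := by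
      rw [add_comm, iterM_add]
      exact iterM_length_le σ M hM i _
    calc (iterM σ n [b]).length ≤ M ^ i * (iterM σ n [l]).length := h1.trans h2
      _ ≤ M ^ N * (iterM σ n [l]).length := by
          exact Nat.mul_le_mul_right _ (Nat.pow_le_pow_right hM1 hiN)
  rw [inv_mul_le_iff₀ (by positivity)]
  exact_mod_cast key
end

section
/- Let (a_ℓ)_{ℓ≥1} be a sequence of positive integers and let α = [0; a_1, a_2, …] with convergents p_ℓ/q_ℓ. Let s and m be integers with 1 ≤ s ≤ m, and assume the prefix a_1 ⋯ a_m is periodic with period s, i.e., a_{h+s} = a_h for all 1 ≤ h ≤ m − s. Let P(X) = q_{s−1} X² + (q_s − p_{s−1}) X − p_s. Then |P(α)| ≤ 4 · q_s · q_m^{−2}. -/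
open Filter Topology

/-- Denominators of the convergents of the continued fraction `[0; a 0, a 1, ...]`,
where `a i` denotes the `(i+1)`-st partial quotient `a_{i+1}` of the paper:
`q_0 = 1`, `q_1 = a_1`, `q_{ℓ+1} = a_{ℓ+1} q_ℓ + q_{ℓ-1}`. -/
def cfQ (a : ℕ → ℕ) : ℕ → ℕ
  | 0 => 1
  | 1 => a 0
  | n + 2 => a (n + 1) * cfQ a (n + 1) + cfQ a n

/-- Numerators of the convergents of the continued fraction `[0; a 0, a 1, ...]`:
`p_0 = 0`, `p_1 = 1`, `p_{ℓ+1} = a_{ℓ+1} p_ℓ + p_{ℓ-1}`. -/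
def cfP (a : ℕ → ℕ) : ℕ → ℕ
  | 0 => 0
  | 1 => 1
  | n + 2 => a (n + 1) * cfP a (n + 1) + cfP a n

/-!
Write `e_n = q_n α - p_n` for the error of the `n`-th convergent; `(-1)^n e_n` lies in
`[0, 1/q_{n+1}]`. Put `t = s - 1` and `r = m - s`. Because `a_1 ⋯ a_m` has period `s`, the
continued fraction splits at index `s` as `q_m = q_s q_r + q_t p_r` and
`p_m = p_s q_r + p_t p_r`, and substituting these gives `q_r P(α) = e_t e_r + e_m`. The two
summands have opposite signs, so `|q_r P(α)| ≤ max (1/(q_s q_r)) (1/q_m)`, and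
`q_m ≤ 2 q_s q_r` turns this into the claimed bound.
-/

section Convergents

variable {a : ℕ → ℕ}

theorem cfQ_pos (hpos : ∀ i, 0 < a i) : ∀ n, 0 < cfQ a n
  | 0 => one_pos
  | 1 => hpos 0
  | n + 2 => Nat.add_pos_right _ (cfQ_pos hpos n)

theorem cfQ_le_cfQ_succ (hpos : ∀ i, 0 < a i) : ∀ n, cfQ a n ≤ cfQ a (n + 1)
  | 0 => hpos 0
  | n + 1 => calc
      cfQ a (n + 1) ≤ a (n + 1) * cfQ a (n + 1) := Nat.le_mul_of_pos_left _ (hpos (n + 1))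
      _ ≤ cfQ a (n + 2) := Nat.le_add_right _ _

theorem cfQ_mono (hpos : ∀ i, 0 < a i) : Monotone (cfQ a) :=
  monotone_nat_of_le_succ (cfQ_le_cfQ_succ hpos)

theorem cfP_le_cfQ (hpos : ∀ i, 0 < a i) : ∀ n, cfP a n ≤ cfQ a n
  | 0 => zero_le_one
  | 1 => hpos 0
  | n + 2 => Nat.add_le_add (Nat.mul_le_mul_left _ (cfP_le_cfQ hpos (n + 1))) (cfP_le_cfQ hpos n)

theorem cfP_succ_mul_cfQ_sub_cfP_mul_cfQ_succ (a : ℕ → ℕ) :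
    ∀ n, (cfP a (n + 1) : ℤ) * cfQ a n - cfP a n * cfQ a (n + 1) = (-1) ^ n
  | 0 => by simp [cfP, cfQ]
  | n + 1 => by
      have h := cfP_succ_mul_cfQ_sub_cfP_mul_cfQ_succ a n
      simp only [cfP, cfQ]
      push_cast
      linear_combination (-1 : ℤ) * h

theorem cfQ_congr {b : ℕ → ℕ} : ∀ {n}, (∀ i < n, a i = b i) → cfQ a n = cfQ b n
  | 0, _ => rfl
  | 1, h => h 0 one_pos
  | n + 2, h => by
      simp only [cfQ]
      rw [h (n + 1) (by omega), cfQ_congr fun i hi => h i (by omega),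
        cfQ_congr fun i hi => h i (by omega)]

theorem cfP_congr {b : ℕ → ℕ} : ∀ {n}, (∀ i < n, a i = b i) → cfP a n = cfP b n
  | 0, _ => rfl
  | 1, _ => rfl
  | n + 2, h => by
      simp only [cfP]
      rw [h (n + 1) (by omega), cfP_congr fun i hi => h i (by omega),
        cfP_congr fun i hi => h i (by omega)]

/-- Splitting `[0; a_1, a_2, …]` after `a_{t+1}`: every solution of the recurrence of the
convergents is a combination of its values at `t`, `t + 1` with coefficients the convergents of
the tail `[0; a_{t+2}, a_{t+3}, …]`. -/
theorem add_eq_of_cf_recurrence (f : ℕ → ℕ)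
    (hf : ∀ n, f (n + 2) = a (n + 1) * f (n + 1) + f n) (t : ℕ) : ∀ ℓ, f (t + 1 + ℓ) =
      f (t + 1) * cfQ (fun i => a (t + 1 + i)) ℓ + f t * cfP (fun i => a (t + 1 + i)) ℓ
  | 0 => by simp [cfQ, cfP]
  | 1 => by simp only [cfQ, cfP, hf t]; ring
  | ℓ + 2 => by
      rw [show t + 1 + (ℓ + 2) = t + 1 + ℓ + 2 by omega, hf,
        show t + 1 + ℓ + 1 = t + 1 + (ℓ + 1) by omega, add_eq_of_cf_recurrence f hf t (ℓ + 1),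
        add_eq_of_cf_recurrence f hf t ℓ]
      simp only [cfQ, cfP]
      ring

theorem cfQ_add_of_periodic {t r : ℕ}
    (hper : ∀ i, i + (t + 1) < t + 1 + r → a (i + (t + 1)) = a i) :
    cfQ a (t + 1 + r) = cfQ a (t + 1) * cfQ a r + cfQ a t * cfP a r := by
  have htail : ∀ i < r, a (t + 1 + i) = a i := fun i hi => by
    rw [add_comm]; exact hper i (by omega)
  rw [add_eq_of_cf_recurrence (cfQ a) (fun _ => rfl), cfQ_congr htail, cfP_congr htail]

theorem cfP_add_of_periodic {t r : ℕ}
    (hper : ∀ i, i + (t + 1) < t + 1 + r → a (i + (t + 1)) = a i) :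
    cfP a (t + 1 + r) = cfP a (t + 1) * cfQ a r + cfP a t * cfP a r := by
  have htail : ∀ i < r, a (t + 1 + i) = a i := fun i hi => by
    rw [add_comm]; exact hper i (by omega)
  rw [add_eq_of_cf_recurrence (cfP a) (fun _ => rfl), cfQ_congr htail, cfP_congr htail]

end Convergents

section Approximation

variable {a : ℕ → ℕ}

noncomputable def cfConv (a : ℕ → ℕ) (n : ℕ) : ℝ := cfP a n / cfQ a n

def cfErr (a : ℕ → ℕ) (α : ℝ) (n : ℕ) : ℝ := cfQ a n * α - cfP a n

theorem cfConv_succ_sub (hpos : ∀ i, 0 < a i) (n : ℕ) :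
    cfConv a (n + 1) - cfConv a n = (-1) ^ n / (cfQ a n * cfQ a (n + 1)) := by
  have h0 : (0 : ℝ) < cfQ a n := mod_cast cfQ_pos hpos n
  have h1 : (0 : ℝ) < cfQ a (n + 1) := mod_cast cfQ_pos hpos (n + 1)
  have hdet : (cfP a (n + 1) : ℝ) * cfQ a n - cfP a n * cfQ a (n + 1) = (-1) ^ n := mod_cast
    cfP_succ_mul_cfQ_sub_cfP_mul_cfQ_succ a n
  rw [cfConv, cfConv, div_sub_div _ _ h1.ne' h0.ne', ← hdet]
  ring

theorem neg_one_pow_mul_cfConv_sub_mem_Icc (hpos : ∀ i, 0 < a i) (k : ℕ) : ∀ n,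
    (-1) ^ n * (cfConv a (n + k) - cfConv a n) ∈
      Set.Icc (0 : ℝ) (1 / (cfQ a n * cfQ a (n + 1))) := by
  induction k with
  | zero =>
    intro n
    simp only [add_zero, sub_self, mul_zero, Set.left_mem_Icc]
    positivity
  | succ k ih =>
    intro n
    obtain ⟨hlow, hupp⟩ := ih (n + 1)
    have hstep : (-1) ^ n * (cfConv a (n + (k + 1)) - cfConv a n) = 1 / (cfQ a n * cfQ a (n + 1))
        - (-1) ^ (n + 1) * (cfConv a (n + 1 + k) - cfConv a (n + 1)) := by
      rw [← add_assoc, add_right_comm, show cfConv a (n + 1 + k) - cfConv a n =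
          (cfConv a (n + 1 + k) - cfConv a (n + 1)) + (cfConv a (n + 1) - cfConv a n) by ring,
        cfConv_succ_sub hpos, mul_add, mul_div_assoc', ← pow_add, Even.neg_one_pow ⟨n, rfl⟩,
        pow_succ]
      ring
    have hanti :
        1 / ((cfQ a (n + 1) : ℝ) * cfQ a (n + 1 + 1)) ≤ 1 / (cfQ a n * cfQ a (n + 1)) := by
      have h0 : (0 : ℝ) < cfQ a n := mod_cast cfQ_pos hpos n
      have h1 : (0 : ℝ) < cfQ a (n + 1) := mod_cast cfQ_pos hpos (n + 1)
      rw [mul_comm (cfQ a n : ℝ)]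
      exact one_div_le_one_div_of_le (by positivity)
        (mul_le_mul_of_nonneg_left (mod_cast cfQ_mono hpos (by omega)) h1.le)
    rw [hstep]
    constructor <;> linarith

theorem neg_one_pow_mul_cfErr_mem_Icc (hpos : ∀ i, 0 < a i) {α : ℝ}
    (hα : Tendsto (cfConv a) atTop (𝓝 α)) (n : ℕ) :
    (-1) ^ n * cfErr a α n ∈ Set.Icc (0 : ℝ) (1 / cfQ a (n + 1)) := by
  have hq : (0 : ℝ) < cfQ a n := mod_cast cfQ_pos hpos n
  have hlim : Tendsto (fun j => (-1) ^ n * (cfConv a j - cfConv a n)) atTop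
      (𝓝 ((-1) ^ n * (α - cfConv a n))) := (hα.sub_const _).const_mul _
  have hmem : ∀ᶠ j in atTop, (-1) ^ n * (cfConv a j - cfConv a n) ∈
      Set.Icc (0 : ℝ) (1 / (cfQ a n * cfQ a (n + 1))) := by
    filter_upwards [eventually_ge_atTop n] with j hj
    obtain ⟨k, rfl⟩ := Nat.exists_eq_add_of_le hj
    exact neg_one_pow_mul_cfConv_sub_mem_Icc hpos k n
  have hErr : (-1) ^ n * cfErr a α n = cfQ a n * ((-1) ^ n * (α - cfConv a n)) := by
    rw [cfErr, cfConv]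
    field_simp
  rw [hErr]
  refine ⟨?_, ?_⟩
  · exact mul_nonneg hq.le (ge_of_tendsto hlim (hmem.mono fun _ h => h.1))
  · calc (cfQ a n : ℝ) * ((-1) ^ n * (α - cfConv a n))
        ≤ cfQ a n * (1 / (cfQ a n * cfQ a (n + 1))) :=
          mul_le_mul_of_nonneg_left (le_of_tendsto hlim (hmem.mono fun _ h => h.2)) hq.le
      _ = 1 / cfQ a (n + 1) := by field_simp

theorem abs_cfErr_le_one_div_cfQ_succ (hpos : ∀ i, 0 < a i) {α : ℝ}
    (hα : Tendsto (cfConv a) atTop (𝓝 α)) (n : ℕ) : |cfErr a α n| ≤ 1 / cfQ a (n + 1) := by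
  obtain ⟨hlow, hupp⟩ := neg_one_pow_mul_cfErr_mem_Icc hpos hα n
  rwa [← abs_of_nonneg hlow, abs_mul, abs_pow, abs_neg, abs_one, one_pow, one_mul] at hupp

theorem abs_cfErr_le_one_div_cfQ (hpos : ∀ i, 0 < a i) {α : ℝ}
    (hα : Tendsto (cfConv a) atTop (𝓝 α)) (n : ℕ) : |cfErr a α n| ≤ 1 / cfQ a n := by
  have h0 : (0 : ℝ) < cfQ a n := mod_cast cfQ_pos hpos n
  refine (abs_cfErr_le_one_div_cfQ_succ hpos hα n).trans (one_div_le_one_div_of_le h0 ?_)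
  exact_mod_cast cfQ_le_cfQ_succ hpos n

theorem cfErr_add_mul_cfErr_mul_cfErr_nonpos (hpos : ∀ i, 0 < a i) {α : ℝ}
    (hα : Tendsto (cfConv a) atTop (𝓝 α)) (t r : ℕ) :
    cfErr a α (t + 1 + r) * (cfErr a α t * cfErr a α r) ≤ 0 := by
  have hsign (n : ℕ) := (neg_one_pow_mul_cfErr_mem_Icc hpos hα n).1
  have hprod := mul_nonneg (hsign (t + 1 + r)) (mul_nonneg (hsign t) (hsign r))
  have hodd : (-1 : ℝ) ^ (t + 1 + r) * ((-1) ^ t * (-1) ^ r) = -1 := by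
    rw [← pow_add, ← pow_add, Odd.neg_one_pow ⟨t + r, by ring⟩]
  nlinarith

end Approximation

theorem abs_add_le_max_of_mul_nonpos {u v : ℝ} (h : u * v ≤ 0) : |u + v| ≤ max |u| |v| := by
  rcases mul_nonpos_iff.mp h with ⟨hu, hv⟩ | ⟨hu, hv⟩
  · rw [abs_of_nonneg hu, abs_of_nonpos hv, abs_le]
    constructor <;> linarith [le_max_left u (-v), le_max_right u (-v)]
  · rw [abs_of_nonpos hu, abs_of_nonneg hv, abs_le]
    constructor <;> linarith [le_max_left (-u) v, le_max_right (-u) v]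

theorem abs_le_of_mul_eq_add {qs qr qm E u v : ℝ} (hqs : 0 < qs) (hqr : 0 < qr) (hqm : 0 < qm)
    (hqm_le : qm ≤ 2 * qs * qr) (hu : |u| ≤ 1 / qm) (hv : |v| ≤ 1 / (qs * qr))
    (huv : u * v ≤ 0) (hE : qr * E = u + v) : |E| ≤ 4 * qs / qm ^ 2 := by
  have hE_le : qr * |E| ≤ max (1 / qm) (1 / (qs * qr)) := by
    calc qr * |E| = |u + v| := by rw [← hE, abs_mul, abs_of_pos hqr]
      _ ≤ max |u| |v| := abs_add_le_max_of_mul_nonpos huv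
      _ ≤ _ := max_le_max hu hv
  have hE_nonneg := abs_nonneg E
  rw [le_div_iff₀ (by positivity)]
  rcases le_max_iff.mp hE_le with h | h
  · rw [le_div_iff₀ hqm] at h
    nlinarith [mul_le_mul_of_nonneg_left hqm_le (mul_nonneg hE_nonneg hqm.le)]
  · rw [le_div_iff₀ (by positivity)] at h
    have h2qsqr : (0 : ℝ) ≤ 2 * qs * qr := by positivity
    nlinarith [mul_le_mul_of_nonneg_left hqm_le (mul_nonneg hE_nonneg hqm.le),
      mul_le_mul_of_nonneg_left hqm_le (mul_nonneg hE_nonneg h2qsqr)]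

/-- Inequality (3) of the paper: let `α = [0; a_1, a_2, …]` (with `a i`
encoding `a_{i+1}`) with convergents `p_ℓ/q_ℓ`, and suppose the prefix
`a_1 ⋯ a_m` is periodic with period `s` where `1 ≤ s ≤ m`.  Then the quadratic
polynomial `P(X) = q_{s−1} X² + (q_s − p_{s−1}) X − p_s` satisfies
`|P(α)| ≤ 4 q_s q_m⁻²`. -/
theorem statement14 (a : ℕ → ℕ) (hpos : ∀ i, 0 < a i) (α : ℝ)
    (hα : Filter.Tendsto (fun ℓ => (cfP a ℓ : ℝ) / (cfQ a ℓ : ℝ)) Filter.atTop (𝓝 α))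
    (s m : ℕ) (hs : 1 ≤ s) (hsm : s ≤ m)
    (hper : ∀ i, i + s < m → a (i + s) = a i) :
    |(cfQ a (s - 1) : ℝ) * α ^ 2 + ((cfQ a s : ℝ) - (cfP a (s - 1) : ℝ)) * α
        - (cfP a s : ℝ)| ≤ 4 * (cfQ a s : ℝ) / (cfQ a m : ℝ) ^ 2 := by
  obtain ⟨t, rfl⟩ : ∃ t, s = t + 1 := ⟨s - 1, by omega⟩
  obtain ⟨r, rfl⟩ : ∃ r, m = t + 1 + r := ⟨m - (t + 1), by omega⟩
  have hα' : Tendsto (cfConv a) atTop (𝓝 α) := hα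
  have hQ := cfQ_add_of_periodic hper
  have hP := cfP_add_of_periodic hper
  have hqm_le : (cfQ a (t + 1 + r) : ℝ) ≤ 2 * cfQ a (t + 1) * cfQ a r := by
    have := Nat.mul_le_mul (cfQ_le_cfQ_succ hpos t) (cfP_le_cfQ hpos r)
    exact_mod_cast (by rw [hQ]; linarith : cfQ a (t + 1 + r) ≤ 2 * cfQ a (t + 1) * cfQ a r)
  have hv : |cfErr a α t * cfErr a α r| ≤ 1 / (cfQ a (t + 1) * cfQ a r) := by
    rw [abs_mul, ← one_div_mul_one_div]
    exact mul_le_mul (abs_cfErr_le_one_div_cfQ_succ hpos hα' t)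
      (abs_cfErr_le_one_div_cfQ hpos hα' r) (abs_nonneg _) (by positivity)
  rw [Nat.add_sub_cancel]
  refine abs_le_of_mul_eq_add (mod_cast cfQ_pos hpos _) (mod_cast cfQ_pos hpos r)
    (mod_cast cfQ_pos hpos _) hqm_le (abs_cfErr_le_one_div_cfQ hpos hα' _) hv
    (cfErr_add_mul_cfErr_mul_cfErr_nonpos hpos hα' t r) ?_
  simp only [cfErr, hQ, hP]
  push_cast
  ring
end

section
/- Let a = a_1a_2… be an infinite word over a (countable) alphabet and let k be a positive integer. Assume that every finite factor W of a occurs infinitely often in a and that the gap between the starting positions of any two consecutive occurrences in a of a factor W is at most k·|W|. Then either a is eventually periodic, or a satisfies Condition (*)_{1+1/k}. -/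
/-- An infinite word is eventually periodic. -/
def EventuallyPeriodic {A : Type*} (x : ℕ → A) : Prop :=
  ∃ k p : ℕ, 0 < p ∧ ∀ n, k ≤ n → x (n + p) = x n

/-- The infinite word `x` begins with `V^w`: its prefix of length `⌈w·|V|⌉`
coincides with the prefix of the same length of the periodic word `VVV⋯`. -/
def BeginsWithPow {A : Type*} (x : ℕ → A) (V : List A) (w : ℝ) : Prop :=
  ∀ i < ⌈w * V.length⌉₊, V[i % V.length]? = some (x i)

/-- Condition `(*)_w`: `x` is not eventually periodic and there is a sequence of
nonempty finite words `V n` with strictly increasing lengths such that `x` begins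
with `(V n)^w` for every `n`. -/
def ConditionStar {A : Type*} (x : ℕ → A) (w : ℝ) : Prop :=
  ¬ EventuallyPeriodic x ∧
    ∃ V : ℕ → List A, (∀ n, V n ≠ []) ∧
      (StrictMono fun n => (V n).length) ∧
      ∀ n, BeginsWithPow x (V n) w

/-- The finite word `W` occurs in the infinite word `x` at position `i`
(0-indexed). -/
def Occurs {A : Type*} (x : ℕ → A) (W : List A) (i : ℕ) : Prop :=
  ∀ t < W.length, W[t]? = some (x (i + t))

lemma per_aux {A : Type*} (x : ℕ → A) (j n : ℕ) (hj : 0 < j)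
    (hP : ∀ i < n, x (i + j) = x i) : ∀ i < j + n, x i = x (i % j) := by
  intro i
  induction i using Nat.strong_induction_on with
  | _ i ih =>
    intro hi
    rcases lt_or_ge i j with h | h
    · rw [Nat.mod_eq_of_lt h]
    · have h1 : i - j < n := by omega
      have h2 : x i = x (i - j) := by
        have := hP (i - j) h1
        rw [Nat.sub_add_cancel h] at this
        exact this
      rw [h2, Nat.mod_eq_sub_mod h]
      exact ih (i - j) (by omega) (by omega)

lemma bwp_aux {A : Type*} (x : ℕ → A) (k j n : ℕ) (hk : 0 < k) (hj : 0 < j)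
    (hjn : j ≤ k * n) (hP : ∀ i < n, x (i + j) = x i) :
    BeginsWithPow x (List.ofFn fun i : Fin j => x i) (1 + 1 / (k : ℝ)) := by
  intro i hi
  rw [List.length_ofFn] at hi ⊢
  have hk' : (0 : ℝ) < k := by exact_mod_cast hk
  have hceil : ⌈(1 + 1 / (k : ℝ)) * j⌉₊ ≤ j + n := by
    apply Nat.ceil_le.mpr
    push_cast
    have h1 : (j : ℝ) ≤ k * n := by exact_mod_cast hjn
    have h2 : (j : ℝ) / k ≤ n := by
      rw [div_le_iff₀ hk']; linarith [mul_comm (k : ℝ) (n : ℝ)]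
    have h3 : (1 + 1 / (k : ℝ)) * j = j + j / k := by field_simp
    linarith
  have hlt : i % j < j := Nat.mod_lt i hj
  rw [List.getElem?_eq_getElem (by simpa using hlt)]
  simp only [List.getElem_ofFn]
  exact congrArg some (per_aux x j n hj hP i (lt_of_lt_of_le hi hceil)).symm

/-- Key step in the proof of Theorem 5: let `x` be an infinite word over a
countable alphabet and let `k` be a positive integer.  If every (nonempty)
factor of `x` occurs infinitely often and the gap between the starting
positions of two consecutive occurrences of a factor `W` is at most `k·|W|`
(i.e. after every occurrence there is another one within `k·|W|`), then either
`x` is eventually periodic or `x` satisfies Condition `(*)_{1+1/k}`. -/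
theorem statement15 {A : Type*} [Countable A] (x : ℕ → A) (k : ℕ) (hk : 0 < k)
    (hrec : ∀ W : List A, W ≠ [] → ∀ i, Occurs x W i →
      ∃ j, i < j ∧ j ≤ i + k * W.length ∧ Occurs x W j) :
    EventuallyPeriodic x ∨ ConditionStar x (1 + 1 / (k : ℝ)) := by
  by_cases hep : EventuallyPeriodic x
  · exact Or.inl hep
  right
  -- for each n, get a период j with 0 < j ≤ k*(n+1) and x periodic with period j on prefix
  have hch : ∀ n : ℕ, ∃ j, 0 < j ∧ j ≤ k * (n + 1) ∧ ∀ i < n + 1, x (i + j) = x i := by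
    intro n
    have hW : Occurs x (List.ofFn fun t : Fin (n + 1) => x t) 0 := by
      intro t ht
      rw [List.length_ofFn] at ht
      rw [List.getElem?_eq_getElem (by simpa using ht), List.getElem_ofFn]
      simp
    obtain ⟨j, hj0, hjle, hjocc⟩ := hrec _ (by simp) 0 hW
    refine ⟨j, hj0, by simpa using hjle, ?_⟩
    intro i hi
    have h1 := hjocc i (by simpa using hi)
    have h2 := hW i (by simpa using hi)
    rw [h2] at h1
    rw [Nat.add_comm i j]
    have := (Option.some_injective _ h1).symm
    simpa using this
  choose j hj0 hjle hjP using hch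
  let p : ℕ → Prop := fun m => 0 < m ∧
    BeginsWithPow x (List.ofFn fun i : Fin m => x i) (1 + 1 / (k : ℝ))
  let T : Set ℕ := setOf p
  have hjT : ∀ n, j n ∈ T := fun n =>
    ⟨hj0 n, bwp_aux x k (j n) (n + 1) hk (hj0 n) (hjle n) (hjP n)⟩
  have hTinf : T.Infinite := by
    by_contra hfin
    rw [Set.not_infinite] at hfin
    have hrange : (Set.range j).Finite := hfin.subset (Set.range_subset_iff.mpr hjT)
    have : Finite ↥(Set.range j) := hrange.to_subtype
    obtain ⟨y, hy⟩ := Finite.exists_infinite_fiber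
      (fun n => (⟨j n, Set.mem_range_self n⟩ : Set.range j))
    have hpre : (fun n => (⟨j n, Set.mem_range_self n⟩ : Set.range j)) ⁻¹' {y}
        = {n | j n = ↑y} := by
      ext n; simp [Subtype.ext_iff]
    have hj0inf : {n | j n = (y : ℕ)}.Infinite := by
      rw [← hpre]; exact Set.infinite_coe_iff.mp hy
    apply hep
    refine ⟨0, (y : ℕ), ?_, ?_⟩
    · obtain ⟨n, hn⟩ := hj0inf.nonempty
      have hjn : j n = (y : ℕ) := hn
      rw [← hjn]; exact hj0 n
    · intro m _
      obtain ⟨n, hn, hnm⟩ := hj0inf.exists_gt m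
      have hjn : j n = (y : ℕ) := hn
      rw [← hjn]
      exact hjP n m (by omega)
  have hmem : ∀ n, p (Nat.nth p n) := fun n => Nat.nth_mem_of_infinite hTinf n
  refine ⟨hep, fun n => List.ofFn fun i : Fin (Nat.nth p n) => x i, ?_, ?_, ?_⟩
  · intro n
    have h1 := (hmem n).1
    intro h
    apply_fun List.length at h
    simp only [List.length_ofFn, List.length_nil] at h
    omega
  · simpa only [List.length_ofFn] using Nat.nth_strictMono hTinf
  · intro n
    exact (hmem n).2
end

section
/- Let U and V be finite words over an alphabet, let x be a letter, and let w > 1 be a rational number. If an infinite word a begins with the word U x followed by (Vx)^w, then a also begins with U followed by (xV)^w; moreover |U|/|xV| ≤ |Ux|/|Vx|. -/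
/-- The infinite word `x` begins with the finite word `U` followed by `W^w`:
the prefix of `x` of length `|U| + ⌈w·|W|⌉` is `U` followed by the prefix of
length `⌈w·|W|⌉` of the periodic word `WWW⋯`. -/
def BeginsWithWordThenPow {A : Type*} (x : ℕ → A) (U W : List A) (w : ℚ) : Prop :=
  (∀ i < U.length, U[i]? = some (x i)) ∧
    ∀ i < ⌈w * W.length⌉₊, W[i % W.length]? = some (x (U.length + i))

/-- Observation in the proof of Theorem 2: if an infinite word `a` begins with
`U x (V x)^w` for a rational `w > 1`, then it also begins with `U (x V)^w`,
and moreover `|U|/|xV| ≤ |Ux|/|Vx|`. -/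
theorem statement16 {A : Type*} (U V : List A) (l : A) (w : ℚ) (hw : 1 < w)
    (a : ℕ → A) (h : BeginsWithWordThenPow a (U ++ [l]) (V ++ [l]) w) :
    BeginsWithWordThenPow a U (l :: V) w ∧
      (U.length : ℚ) / ((l :: V).length : ℚ) ≤
        ((U ++ [l]).length : ℚ) / ((V ++ [l]).length : ℚ) := by
  obtain ⟨h1, h2⟩ := h
  have hlenVl : (V ++ [l]).length = V.length + 1 := by simp
  have hlenlV : (l :: V).length = V.length + 1 := by simp
  have hlenUl : (U ++ [l]).length = U.length + 1 := by simp
  rw [hlenVl, hlenUl] at h2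
  set n := V.length with hn
  constructor
  · constructor
    · intro i hi
      have := h1 i (by rw [hlenUl]; omega)
      rwa [List.getElem?_append_left hi] at this
    · intro i hi
      rw [hlenlV] at hi ⊢
      have hdm : (n + 1) * (i / (n + 1)) + i % (n + 1) = i := Nat.div_add_mod i (n + 1)
      have hrlt : i % (n + 1) < n + 1 := Nat.mod_lt _ (by omega)
      have hrle : i % (n + 1) ≤ i := Nat.mod_le i (n + 1)
      rcases hr : i % (n + 1) with _ | r'
      · rcases Nat.eq_zero_or_pos i with rfl | hipos
        · have := h1 U.length (by rw [hlenUl]; omega)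
          rw [List.getElem?_append_right (le_refl _)] at this
          simp only [Nat.sub_self, List.getElem?_cons_zero] at this ⊢
          simpa using this
        · rcases hq : i / (n + 1) with _ | q'
          · rw [hq, hr] at hdm; simp at hdm; omega
          · have hi1 : i - 1 = (n + 1) * q' + n := by
              rw [hq, hr, Nat.mul_succ] at hdm; omega
            have hmod : (i - 1) % (n + 1) = n := by
              rw [hi1, Nat.mul_add_mod, Nat.mod_eq_of_lt (by omega)]
            have h3 := h2 (i - 1) (by omega)
            rw [hmod, List.getElem?_append_right (by omega)] at h3
            simp only [hn, Nat.sub_self, List.getElem?_cons_zero] at h3 ⊢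
            have heq : U.length + 1 + (i - 1) = U.length + i := by omega
            rw [heq] at h3
            exact h3
      · have hi1 : i - 1 = (n + 1) * (i / (n + 1)) + r' := by omega
        have hmod : (i - 1) % (n + 1) = r' := by
          rw [hi1, Nat.mul_add_mod, Nat.mod_eq_of_lt (by omega)]
        have h3 := h2 (i - 1) (by omega)
        rw [hmod, List.getElem?_append_left (by omega)] at h3
        have heq : U.length + 1 + (i - 1) = U.length + i := by omega
        rw [heq] at h3
        rw [List.getElem?_cons_succ, h3]
  · rw [hlenlV, hlenVl, hlenUl]
    have hpos : (0 : ℚ) < (n : ℚ) + 1 := by positivity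
    push_cast
    rw [div_le_div_iff₀ hpos hpos]
    nlinarith [hpos]
end
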